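/- Let c > 0, H ∈ (1/2, 1), a ∈ ℝ, b ≠ 0, s > 0 fixed, and K > 0 a constant. Define r(t) = [(1/2)a²sc + b²Hs·c^{2H}t^{2H−1}] / (√((1/2)a²ct + b²H c^{2H} t^{2H}) · K). Then as t → ∞, r(t) = (a² s c^{1−H} /(2√H |b| K))·t^{−H} + (|b| √H s c^{H} / K)·t^{H−1} + o(t^{−H} + t^{H−1}); in particular r(t) → 0 and r(t)·t^{1−H} → |b|√H s c^{H}/K. -/
import Mathlib


open Filter Asymptotics

set_option maxHeartbeats 1000000 in
/-- Asymptotic decay of the correlation of mixed fBm time-changed by a tempered stable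
subordinator (`c = αλ^{α−1}`, `K = √(E(Y^H_{S_s})²)`):
`r(t) = (a²sc^{1−H}/(2√H|b|K))·t^{−H} + (|b|√H s c^{H}/K)·t^{H−1} + o(t^{−H}+t^{H−1})`,
in particular `r(t) → 0` and `r(t)·t^{1−H} → |b|√H s c^{H}/K`. -/
theorem tss_corr_asymptotics
    (a b c s K H : ℝ) (hc : 0 < c) (hH : H ∈ Set.Ioo (1 / 2 : ℝ) 1)
    (hb : b ≠ 0) (hs : 0 < s) (hK : 0 < K)
    (r : ℝ → ℝ)
    (hr : ∀ t : ℝ, r t = ((1 / 2) * a ^ 2 * s * c + b ^ 2 * H * s * c ^ (2 * H) * t ^ (2 * H - 1))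
        / (Real.sqrt ((1 / 2) * a ^ 2 * c * t + b ^ 2 * H * c ^ (2 * H) * t ^ (2 * H)) * K)) :
    (fun t : ℝ => r t
        - ((a ^ 2 * s * c ^ (1 - H) / (2 * Real.sqrt H * |b| * K)) * t ^ (-H)
          + (|b| * Real.sqrt H * s * c ^ H / K) * t ^ (H - 1)))
      =o[atTop] (fun t : ℝ => t ^ (-H) + t ^ (H - 1))
    ∧ Tendsto r atTop (nhds 0)
    ∧ Tendsto (fun t : ℝ => r t * t ^ (1 - H)) atTop
        (nhds (|b| * Real.sqrt H * s * c ^ H / K)) := by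
  obtain ⟨hH1, hH2⟩ := hH
  have hH0 : (0:ℝ) < H := by linarith
  set A : ℝ := 1/2 * a^2 * s * c with hA
  set B : ℝ := b^2 * H * s * c ^ (2*H) with hB
  set A' : ℝ := 1/2 * a^2 * c with hA'
  set B' : ℝ := b^2 * H * c ^ (2*H) with hB'
  have hbb : (0:ℝ) < b^2 := by positivity
  have hB'pos : 0 < B' := by rw [hB']; positivity
  have hA'nn : 0 ≤ A' := by rw [hA']; positivity
  have hAnn : 0 ≤ A := by rw [hA]; positivity
  have hBpos : 0 < B := by rw [hB]; positivity
  have hu2 : c ^ (2*H) = (c ^ H)^2 := by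
    rw [← Real.rpow_natCast (c ^ H) 2, ← Real.rpow_mul hc.le]; norm_num; ring_nf
  have hcu : c ^ (1-H) * c ^ H = c := by
    rw [← Real.rpow_add hc]; norm_num
  have hsB' : Real.sqrt B' = |b| * Real.sqrt H * c ^ H := by
    rw [hB', hu2, show b^2 * H * (c^H)^2 = b^2 * ((c^H)^2 * H) by ring,
      Real.sqrt_mul (by positivity), Real.sqrt_mul (by positivity),
      Real.sqrt_sq_eq_abs, Real.sqrt_sq (by positivity)]
    ring
  have hsB'pos : 0 < Real.sqrt B' := Real.sqrt_pos.2 hB'pos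
  have hHs : 0 < Real.sqrt H := Real.sqrt_pos.2 hH0
  have hab : 0 < |b| := abs_pos.2 hb
  have hcH : 0 < c ^ H := Real.rpow_pos_of_pos hc H
  have h1 : |b|^2 = b^2 := sq_abs b
  have h2 : Real.sqrt H ^ 2 = H := Real.sq_sqrt hH0.le
  -- coefficient identities
  have hC1 : a ^ 2 * s * c ^ (1 - H) / (2 * Real.sqrt H * |b| * K) = A / (Real.sqrt B' * K) := by
    rw [hsB', hA]
    rw [div_eq_div_iff (by positivity) (by positivity)]
    linear_combination (a^2 * s * |b| * Real.sqrt H * K) * hcu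
  have hC2 : |b| * Real.sqrt H * s * c ^ H / K = B / (Real.sqrt B' * K) := by
    rw [hsB', hB, hu2]
    rw [div_eq_div_iff (by positivity) (by positivity)]
    linear_combination (s * (c^H)^2 * K * Real.sqrt H ^ 2) * h1 + (s * (c^H)^2 * K * b^2) * h2
  -- auxiliary functions
  set φ : ℝ → ℝ := fun t => A' * t ^ (1 - 2*H) + B' with hφ
  set g : ℝ → ℝ := fun t => Real.sqrt (φ t) with hg
  set h : ℝ → ℝ := fun t => A * t ^ (-H) + B * t ^ (H - 1) with hh
  have hφpos : ∀ t : ℝ, 0 < t → 0 < φ t := fun t ht =>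
    add_pos_of_nonneg_of_pos (mul_nonneg hA'nn (Real.rpow_pos_of_pos ht _).le) hB'pos
  have hgpos : ∀ t : ℝ, 0 < t → 0 < g t := fun t ht => Real.sqrt_pos.2 (hφpos t ht)
  have hexp : Tendsto (fun t : ℝ => t ^ (1 - 2*H)) atTop (nhds 0) := by
    have := tendsto_rpow_neg_atTop (y := 2*H - 1) (by linarith)
    simpa [show -(2*H-1) = 1 - 2*H by ring] using this
  have hφt : Tendsto φ atTop (nhds B') := by
    have : Tendsto (fun t : ℝ => A' * t ^ (1 - 2*H) + B') atTop (nhds (A' * 0 + B')) :=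
      ((hexp.const_mul A').add tendsto_const_nhds)
    simpa using this
  have hgt : Tendsto g atTop (nhds (Real.sqrt B')) :=
    (Real.continuous_sqrt.continuousAt.tendsto).comp hφt
  -- key identity
  have hkey : ∀ t : ℝ, 0 < t → r t = h t / (g t * K) := by
    intro t ht
    have hsq : Real.sqrt (A' * t + B' * t ^ (2*H)) = t ^ H * g t := by
      have e0 : t ^ (2*H) * t ^ (1 - 2*H) = t := by
        rw [← Real.rpow_add ht]; norm_num
      have e1 : A' * t + B' * t ^ (2*H) = t ^ (2*H) * φ t := by
        simp only [hφ]; linear_combination (-(1/2 * a^2 * c)) * e0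
      have ht2 : t ^ (2*H) = (t ^ H)^2 := by
        rw [← Real.rpow_natCast (t ^ H) 2, ← Real.rpow_mul ht.le]; norm_num; ring_nf
      rw [e1, Real.sqrt_mul (by positivity), hg, ht2,
        Real.sqrt_sq (Real.rpow_nonneg ht.le H)]
    have hrt := hr t
    rw [hsq] at hrt
    rw [hrt, hh]
    have htH : (0:ℝ) < t ^ H := Real.rpow_pos_of_pos ht H
    have hgt0 := hgpos t ht
    rw [div_eq_div_iff (by positivity) (by positivity)]
    have e1 : t ^ (-H) * t ^ H = 1 := by
      rw [← Real.rpow_add ht]; norm_num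
    have e2 : t ^ (H-1) * t ^ H = t ^ (2*H - 1) := by
      rw [← Real.rpow_add ht]; ring_nf
    linear_combination (-(A * g t * K)) * e1 + (-(B * g t * K)) * e2
  have hev : ∀ᶠ t : ℝ in atTop, r t = h t / (g t * K) := by
    filter_upwards [eventually_gt_atTop 0] with t ht using hkey t ht
  -- part 2
  have hhz : Tendsto h atTop (nhds 0) := by
    have p1 : Tendsto (fun t : ℝ => t ^ (-H)) atTop (nhds 0) := tendsto_rpow_neg_atTop hH0
    have p2 : Tendsto (fun t : ℝ => t ^ (H-1)) atTop (nhds 0) := by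
      have := tendsto_rpow_neg_atTop (y := 1 - H) (by linarith)
      simpa [show -(1-H) = H - 1 by ring] using this
    have := (p1.const_mul A).add (p2.const_mul B)
    simpa using this
  have hKg : Tendsto (fun t => g t * K) atTop (nhds (Real.sqrt B' * K)) := hgt.mul_const K
  have hpart2 : Tendsto r atTop (nhds 0) := by
    have : Tendsto (fun t => h t / (g t * K)) atTop (nhds (0 / (Real.sqrt B' * K))) :=
      hhz.div hKg (by positivity)
    rw [zero_div] at this
    refine this.congr' ?_
    filter_upwards [eventually_gt_atTop 0] with t ht using (hkey t ht).symm
  -- part 3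
  have hpart3 : Tendsto (fun t : ℝ => r t * t ^ (1 - H)) atTop
      (nhds (|b| * Real.sqrt H * s * c ^ H / K)) := by
    rw [hC2]
    have hev3 : ∀ᶠ t : ℝ in atTop,
        (A * t ^ (1 - 2*H) + B) / (g t * K) = r t * t ^ (1-H) := by
      filter_upwards [eventually_gt_atTop 0] with t ht
      rw [hkey t ht]
      simp only [hh]
      have e1 : t ^ (-H) * t ^ (1-H) = t ^ (1 - 2*H) := by
        rw [← Real.rpow_add ht]; ring_nf
      have e2 : t ^ (H-1) * t ^ (1-H) = 1 := by
        rw [← Real.rpow_add ht]; norm_num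
      rw [div_mul_eq_mul_div]
      congr 1
      linear_combination (-A) * e1 - B * e2
    have hnum : Tendsto (fun t : ℝ => A * t ^ (1 - 2*H) + B) atTop (nhds B) := by
      have := (hexp.const_mul A).add (tendsto_const_nhds (x := B))
      simpa using this
    exact (hnum.div hKg (by positivity)).congr' hev3
  refine ⟨?_, hpart2, hpart3⟩
  -- part 1
  have hbigO : h =O[atTop] (fun t : ℝ => t ^ (-H) + t ^ (H - 1)) := by
    refine IsBigO.of_bound (A + B) ?_
    filter_upwards [eventually_gt_atTop 0] with t ht
    have p1 : (0:ℝ) < t ^ (-H) := Real.rpow_pos_of_pos ht _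
    have p2 : (0:ℝ) < t ^ (H-1) := Real.rpow_pos_of_pos ht _
    simp only [hh, Real.norm_eq_abs]
    rw [abs_of_nonneg (add_nonneg (mul_nonneg hAnn p1.le) (mul_nonneg hBpos.le p2.le)),
      abs_of_nonneg (by positivity)]
    nlinarith [mul_nonneg hAnn p2.le, mul_nonneg hBpos.le p1.le]
  set ε : ℝ → ℝ := fun t => 1 / (g t * K) - 1 / (Real.sqrt B' * K) with hε
  have hεz : Tendsto ε atTop (nhds 0) := by
    have : Tendsto ε atTop (nhds (1 / (Real.sqrt B' * K) - 1 / (Real.sqrt B' * K))) :=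
      ((tendsto_const_nhds.div hKg (by positivity))).sub tendsto_const_nhds
    simpa using this
  have hlit : ε =o[atTop] (fun _ : ℝ => (1:ℝ)) := (isLittleO_one_iff ℝ).2 hεz
  have hprod := hbigO.mul_isLittleO hlit
  refine hprod.congr' ?_ ?_
  · filter_upwards [eventually_gt_atTop 0] with t ht
    have e : A / (Real.sqrt B' * K) * t ^ (-H) + B / (Real.sqrt B' * K) * t ^ (H-1)
        = h t * (1 / (Real.sqrt B' * K)) := by
      rw [hh]; ring
    rw [hkey t ht, hC1, hC2, e, hε, div_eq_mul_one_div (h t) (g t * K)]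
    ring
  · filter_upwards with t
    rw [mul_one]
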